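/- Let E be a row-finite graph and c = c₁⋯c_n a cycle of length n with no exit. Then in M_E^{gr}, the element a = Σ_{i=1}^n r(c_i)(0) satisfies ^1 a = a, and each vertex v on the cycle satisfies ^n v = v (where v denotes v(0)). -/

import Mathlib

set_option linter.unusedSectionVars false

/-- The algebraic preorder on a commutative monoid: `a ≤ b` iff `b = a + c` for some `c`. -/
def algLE {M : Type*} [AddCommMonoid M] (a b : M) : Prop := ∃ c, b = a + c

/-- A row-finite directed graph: vertices `V`, edges `Ed`, source `s`, range `r`,
and for each vertex the (finite) set of edges it emits. -/
structure RFGraph (V : Type) (Ed : Type) where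
  s : Ed → V
  r : Ed → V
  emit : V → Finset Ed
  mem_emit : ∀ e v, e ∈ emit v ↔ s e = v

namespace RFGraph

variable {V Ed : Type} [DecidableEq V] (G : RFGraph V Ed)

/-- The one-step rewriting relation `→₁` on the free commutative monoid `Multiset V`:
replace one occurrence of a non-sink vertex `v` by the sum of ranges of edges emitted by `v`. -/
def Step1 (a b : Multiset V) : Prop :=
  ∃ v : V, v ∈ a ∧ G.emit v ≠ ∅ ∧ b = a.erase v + (G.emit v).val.map G.r

/-- The reflexive-transitive closure `→` of `→₁`. -/
def Step : Multiset V → Multiset V → Prop := Relation.ReflTransGen G.Step1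

/-- The congruence on the free commutative monoid generated by `→₁`. -/
def gcon : AddCon (Multiset V) := addConGen G.Step1

/-- The graph monoid `M_E`. -/
def GM := G.gcon.Quotient

instance : AddCommMonoid G.GM := inferInstanceAs (AddCommMonoid G.gcon.Quotient)

/-- One-step rewriting for the talented monoid: replace `v(i)` by `Σ_{e ∈ s⁻¹(v)} r(e)(i+1)`. -/
def TStep1 (a b : Multiset (V × ℤ)) : Prop :=
  ∃ (v : V) (i : ℤ), (v, i) ∈ a ∧ G.emit v ≠ ∅ ∧
    b = a.erase (v, i) + (G.emit v).val.map (fun e => (G.r e, i + 1))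

/-- The congruence generated by the talented one-step relation. -/
def tcon : AddCon (Multiset (V × ℤ)) := addConGen G.TStep1

/-- The talented monoid `M_E^{gr}`. -/
def TM := G.tcon.Quotient

instance : AddCommMonoid G.TM := inferInstanceAs (AddCommMonoid G.tcon.Quotient)

/-- The generator `v(i)` of the talented monoid. -/
def tgen (v : V) (i : ℤ) : G.TM := G.tcon.mk' {(v, i)}

/-- The shift `v(i) ↦ v(i+n)` on the free commutative monoid `Multiset (V × ℤ)`. -/
def shiftMul (n : ℤ) : Multiset (V × ℤ) →+ Multiset (V × ℤ) where
  toFun a := a.map fun p => (p.1, p.2 + n)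
  map_zero' := rfl
  map_add' a b := Multiset.map_add (fun p => (p.1, p.2 + n)) a b

lemma shift_inj (n : ℤ) : Function.Injective (fun p : V × ℤ => (p.1, p.2 + n)) := by
  rintro ⟨a, b⟩ ⟨c, d⟩ h
  simp only [Prod.mk.injEq] at h
  exact Prod.ext h.1 (by omega)

lemma tstep1_shift (n : ℤ) {a b : Multiset (V × ℤ)} (h : G.TStep1 a b) :
    G.TStep1 (shiftMul n a) (shiftMul n b) := by
  obtain ⟨v, i, hv, hne, rfl⟩ := h
  refine ⟨v, i + n, Multiset.mem_map.2 ⟨(v, i), hv, rfl⟩, hne, ?_⟩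
  show Multiset.map _ _ = _
  rw [Multiset.map_add]
  congr 1
  · exact (Multiset.map_erase _ (shift_inj n) (v, i) a)
  · rw [Multiset.map_map]
    congr 1
    funext e
    simp only [Function.comp_apply]
    congr 1
    omega

lemma tcon_shift (n : ℤ) {a b : Multiset (V × ℤ)} (h : G.tcon a b) :
    G.tcon (shiftMul n a) (shiftMul n b) := by
  have hle : addConGen G.TStep1 ≤
      { r := fun a b => G.tcon (shiftMul n a) (shiftMul n b)
        iseqv := ⟨fun _ => G.tcon.refl _, fun h => G.tcon.symm h,
          fun h₁ h₂ => G.tcon.trans h₁ h₂⟩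
        add' := fun h₁ h₂ => by
          simpa only [map_add] using G.tcon.add h₁ h₂ } := by
    refine AddCon.addConGen_le.2 fun x y hxy => ?_
    exact AddConGen.Rel.of _ _ (G.tstep1_shift n hxy)
  exact hle h

/-- The `ℤ`-action on the talented monoid, `ⁿ(v(i)) = v(i+n)`. -/
def tshift (n : ℤ) : G.TM →+ G.TM :=
  G.tcon.lift (G.tcon.mk'.comp (shiftMul n)) (by
    intro a b h
    show G.tcon.mk' (shiftMul n a) = G.tcon.mk' (shiftMul n b)
    exact (AddCon.eq _).2 (G.tcon_shift n h))

/-- Reachability: there is a (possibly trivial) path from `u` to `v`. -/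
def Reaches (u v : V) : Prop :=
  Relation.ReflTransGen (fun a b => ∃ e : Ed, G.s e = a ∧ G.r e = b) u v

/-- A cycle: a nonempty path of edges, closed up, with distinct source vertices. -/
def IsCycle (p : List Ed) : Prop :=
  ∃ h : p ≠ [], List.Chain' (fun e f => G.r e = G.s f) p ∧
    G.r (p.getLast h) = G.s (p.head h) ∧ (p.map G.s).Nodup

/-- The cycle `p` has an exit: some vertex on it emits an edge not on the cycle. -/
def HasExit (p : List Ed) : Prop :=
  ∃ e : Ed, (∃ f ∈ p, G.s e = G.s f) ∧ e ∉ p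

/-- The cycle `p` has no exit: every vertex on it emits exactly its cycle edge. -/
def NoExit (p : List Ed) : Prop :=
  ∀ e ∈ p, G.emit (G.s e) = {e}

/-- `ℤ`-order-ideals of the talented monoid. -/
def IsOrderIdeal (I : Set G.TM) : Prop :=
  (0 : G.TM) ∈ I ∧ (∀ a b : G.TM, a ∈ I → b ∈ I → a + b ∈ I) ∧
    (∀ (n : ℤ) (a : G.TM), a ∈ I → G.tshift n a ∈ I) ∧
    (∀ a b : G.TM, algLE a b → b ∈ I → a ∈ I)

/-- The smallest `ℤ`-order-ideal of `M_E^{gr}` containing `v(0)`. -/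
def genIdeal (v : V) : Set G.TM :=
  ⋂₀ {I : Set G.TM | G.IsOrderIdeal I ∧ G.tgen v 0 ∈ I}

/-- Minimality in the talented monoid: `0 ≠ b ≤ a` implies `a ≤ b`. -/
def TMin (a : G.TM) : Prop := ∀ b : G.TM, b ≠ 0 → algLE b a → algLE a b

/-- The covering graph `\bar E`. -/
def cover : RFGraph (V × ℤ) (Ed × ℤ) where
  s p := (G.s p.1, p.2)
  r p := (G.r p.1, p.2 + 1)
  emit p := (G.emit p.1).map ⟨fun e => (e, p.2), fun a b h => by
    simpa using congrArg Prod.fst h⟩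
  mem_emit := by
    rintro ⟨e, n⟩ ⟨v, m⟩
    simp only [Finset.mem_map, Function.Embedding.coeFn_mk, Prod.mk.injEq, G.mem_emit]
    constructor
    · rintro ⟨a, ha, rfl, rfl⟩; exact ⟨ha, rfl⟩
    · rintro ⟨rfl, rfl⟩; first | exact ⟨e, rfl, rfl, rfl⟩ | exact ⟨e, rfl, rfl⟩ | exact ⟨e, rfl, ⟨rfl, rfl⟩⟩ | simp

/-- The set of vertices on a cycle. -/
def cycVerts (p : List Ed) : Set V := {v | ∃ e ∈ p, G.s e = v}

end RFGraph

/-! On a cycle without exit each vertex `s(cₖ)` emits only `cₖ`, so the defining relation of the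
talented monoid reads `s(cₖ)(i) = r(cₖ)(i+1) = s(cₖ₊₁)(i+1)`. Going once around the cycle gives
`ⁿv = v`. Summing the relation over the cycle gives `Σ s(cₖ)(0) = ¹(Σ r(cₖ)(0))`, and the left side
equals `Σ r(cₖ)(0)` because the ranges of the cycle edges are their sources, rotated by one. -/

theorem List.map_eq_rotate_one_of_isChain {α β : Type*} {f g : α → β} {l : List α} (hl : l ≠ [])
    (hc : l.IsChain fun a b => f a = g b) (hclose : f (l.getLast hl) = g (l.head hl)) :
    l.map f = (l.map g).rotate 1 := by
  refine List.ext_getElem (by simp) fun i hi _ => ?_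
  simp only [List.getElem_map, List.getElem_rotate, List.length_map]
  rw [List.length_map] at hi
  rcases Nat.lt_or_ge (i + 1) l.length with hlt | hge
  · simpa only [Nat.mod_eq_of_lt hlt] using hc.getElem i hlt
  · obtain rfl : i = l.length - 1 := by omega
    simpa only [Nat.sub_add_cancel (List.length_pos_iff.2 hl), Nat.mod_self,
      List.getLast_eq_getElem, List.head_eq_getElem] using hclose

namespace RFGraph

section

variable {V Ed : Type} {G : RFGraph V Ed} {p : List Ed}

theorem IsCycle.map_r_eq_rotate (hp : G.IsCycle p) : p.map G.r = (p.map G.s).rotate 1 :=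
  let ⟨hnil, hchain, hclose, _⟩ := hp
  List.map_eq_rotate_one_of_isChain hnil hchain hclose

theorem IsCycle.r_getElem (hp : G.IsCycle p) (i : ℕ) (hi : i < p.length) :
    G.r p[i] = G.s (p[(i + 1) % p.length]'(Nat.mod_lt _ (Nat.zero_lt_of_lt hi))) := by
  have h := List.getElem_of_eq hp.map_r_eq_rotate (i := i) (by simpa using hi)
  rw [List.getElem_map, List.getElem_rotate] at h
  simpa using h

end

variable {V Ed : Type} [DecidableEq V] (G : RFGraph V Ed)

theorem tgen_s_eq_tgen_r_of_emit_eq_singleton {e : Ed} (he : G.emit (G.s e) = {e}) (i : ℤ) :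
    G.tgen (G.s e) i = G.tgen (G.r e) (i + 1) := by
  refine (AddCon.eq _).2 (AddConGen.Rel.of _ _ ⟨G.s e, i, Multiset.mem_singleton_self _,
    by simp [he], ?_⟩)
  simp [he]

theorem tshift_tgen (n : ℤ) (v : V) (i : ℤ) : G.tshift n (G.tgen v i) = G.tgen v (i + n) :=
  AddCon.lift_mk' _ _

theorem mk'_coe_map {α : Type*} (l : List α) (f : α → V × ℤ) :
    G.tcon.mk' (l.map f : Multiset (V × ℤ)) = (l.map fun a => G.tgen (f a).1 (f a).2).sum := by
  induction l with
  | nil => rfl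
  | cons a l ih =>
    rw [List.map_cons, ← Multiset.cons_coe, ← Multiset.singleton_add, map_add, ih]
    rfl

variable {G} {p : List Ed}

theorem IsCycle.tgen_s_getElem_eq_of_noExit (hp : G.IsCycle p) (hne : G.NoExit p)
    (j : ℕ) (hj : j < p.length) (i : ℤ) (k : ℕ) :
    G.tgen (G.s p[j]) i =
      G.tgen (G.s (p[(j + k) % p.length]'(Nat.mod_lt _ (Nat.zero_lt_of_lt hj)))) (i + k) := by
  induction k with
  | zero => simp [Nat.mod_eq_of_lt hj]
  | succ k ih =>
    have hk : (j + k) % p.length < p.length := Nat.mod_lt _ (Nat.zero_lt_of_lt hj)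
    rw [ih, G.tgen_s_eq_tgen_r_of_emit_eq_singleton (hne _ (List.getElem_mem hk)),
      hp.r_getElem _ hk]
    simp only [Nat.mod_add_mod, Nat.cast_succ, add_assoc]

theorem IsCycle.tgen_s_add_length_of_noExit (hp : G.IsCycle p) (hne : G.NoExit p) {e : Ed}
    (he : e ∈ p) (i : ℤ) : G.tgen (G.s e) (i + p.length) = G.tgen (G.s e) i := by
  obtain ⟨j, hj, rfl⟩ := List.mem_iff_getElem.1 he
  rw [hp.tgen_s_getElem_eq_of_noExit hne j hj i p.length]
  simp [Nat.add_mod_right, Nat.mod_eq_of_lt hj]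

end RFGraph

/-- If `c = c₁⋯cₙ` is a cycle of length `n` with no exit, then in `M_E^{gr}` the
element `a = Σᵢ r(cᵢ)(0)` satisfies `¹a = a`, and each vertex `v` on the cycle
satisfies `ⁿv = v`. -/
theorem cycle_no_exit_periodic {V Ed : Type} [DecidableEq V] (G : RFGraph V Ed)
    (p : List Ed) (hp : G.IsCycle p) (hne : G.NoExit p) :
    G.tshift 1 (G.tcon.mk' ((p.map fun e => (G.r e, (0 : ℤ))) : Multiset (V × ℤ))) =
        G.tcon.mk' ((p.map fun e => (G.r e, (0 : ℤ))) : Multiset (V × ℤ)) ∧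
      ∀ e ∈ p, G.tshift (p.length : ℤ) (G.tgen (G.s e) 0) = G.tgen (G.s e) 0 := by
  refine ⟨?_, fun e he => by rw [G.tshift_tgen, hp.tgen_s_add_length_of_noExit hne he]⟩
  simp only [G.mk'_coe_map, map_list_sum, List.map_map, Function.comp_def, G.tshift_tgen,
    zero_add]
  calc (p.map fun e => G.tgen (G.r e) 1).sum
      = ((p.map G.s).map fun v => G.tgen v 0).sum := by
        rw [List.map_map]
        exact congrArg _ (List.map_congr_left fun e he =>
          (G.tgen_s_eq_tgen_r_of_emit_eq_singleton (hne e he) 0).symm)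
    _ = (((p.map G.s).rotate 1).map fun v => G.tgen v 0).sum :=
        (((p.map G.s).rotate_perm 1).map _).sum_eq.symm
    _ = (p.map fun e => G.tgen (G.r e) 0).sum := by
        rw [← hp.map_r_eq_rotate, List.map_map]
        rfl
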